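/- arXiv:1111.1900 — 2 statements merged into one kernel-verified Lean document; each statement's English description precedes it below -/
import Mathlib

section
/- Let m ≥ 1, let a_1, …, a_m be integers with a_j ≥ 2 for 1 ≤ j ≤ m−1 and a_m ≥ 1, let n be an integer, and let a > b ≥ 0 be coprime integers with b/a = 1 − 1/(a_1 − 1/(a_2 − ⋯ − 1/a_m)). Then the matrix product [[1,0],[−n,1]]·[[a_1,1],[−1,0]]⋯[[a_{m−1},1],[−1,0]]·[[a_m+1,1],[−1,0]] applied to the column vector (−1,1)ᵀ yields (−a, na+a−b)ᵀ. -/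
/-
With `M x = !![x, 1; -1, 0]`, the product `M a₁ ⋯ M aₘ` sends `(1, 0)` to `(p, -q)`, where
`p, q` follow the convergent recursion `(p, q) ← (a p - q, p)`; hence `gcd(p, q) = 1`, and when
`aⱼ ≥ 2` for `j < m`, `aₘ ≥ 1`, one has `0 < q ≤ p` and `[a₁, …, aₘ]⁻ = p / q`.
Since `M (x + 1) (-1, 1) = -M x (1, 0)`, the product in the theorem sends `(-1, 1)` to `(-p, q)`.
Finally `B / A = 1 - q / p = (p - q) / p`, both fractions reduced with positive denominators,
so `A = p` and `B = p - q`.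
-/

/-- Negative (Hirzebruch–Jung) continued fraction:
`ncf [a₁, …, aₘ] = a₁ - 1/(a₂ - 1/(⋯ - 1/aₘ))`. -/
def ncf : List ℤ → ℚ
  | [] => 0
  | [a] => (a : ℚ)
  | a :: b :: l => (a : ℚ) - 1 / ncf (b :: l)

namespace HirzebruchJung

open Matrix

def stepMatrix (x : ℤ) : Matrix (Fin 2) (Fin 2) ℤ := !![x, 1; -1, 0]

def numDen : List ℤ → ℤ × ℤ
  | [] => (1, 0)
  | a :: l => (a * (numDen l).1 - (numDen l).2, (numDen l).1)

def num (l : List ℤ) : ℤ := (numDen l).1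

def den (l : List ℤ) : ℤ := (numDen l).2

@[simp] lemma num_nil : num [] = 1 := rfl
@[simp] lemma den_nil : den [] = 0 := rfl
@[simp] lemma num_cons (a : ℤ) (l : List ℤ) : num (a :: l) = a * num l - den l := rfl
@[simp] lemma den_cons (a : ℤ) (l : List ℤ) : den (a :: l) = num l := rfl

lemma isCoprime_num_den : ∀ l : List ℤ, IsCoprime (num l) (den l)
  | [] => by simp [isCoprime_one_left]
  | a :: l => by
    simpa [sub_eq_add_neg, add_comm] using ((isCoprime_num_den l).symm.neg_left.add_mul_right_left a)

lemma prod_map_stepMatrix_mulVec : ∀ l : List ℤ,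
    (l.map stepMatrix).prod *ᵥ ![1, 0] = ![num l, -den l]
  | [] => by simp
  | a :: l => by
    rw [List.map_cons, List.prod_cons, ← mulVec_mulVec, prod_map_stepMatrix_mulVec l]
    ext i; fin_cases i
    · simp [stepMatrix]; ring
    · simp [stepMatrix]

lemma prod_mul_stepMatrix_add_one_mulVec (l : List ℤ) (x : ℤ) :
    ((l.map stepMatrix).prod * stepMatrix (x + 1)) *ᵥ ![-1, 1] =
      ![-num (l ++ [x]), den (l ++ [x])] := by
  have hlast : stepMatrix (x + 1) *ᵥ ![-1, 1] = -(stepMatrix x *ᵥ ![1, 0]) := by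
    ext i; fin_cases i <;> simp [stepMatrix]
  have happend : (l.map stepMatrix).prod * stepMatrix x = ((l ++ [x]).map stepMatrix).prod := by
    simp
  rw [← mulVec_mulVec, hlast, mulVec_neg, mulVec_mulVec, happend, prod_map_stepMatrix_mulVec]
  ext i; fin_cases i <;> simp

inductive Admissible : List ℤ → Prop
  | singleton {a : ℤ} : 1 ≤ a → Admissible [a]
  | cons {a : ℤ} {l : List ℤ} : 2 ≤ a → Admissible l → Admissible (a :: l)

lemma Admissible.ne_nil {l : List ℤ} (h : Admissible l) : l ≠ [] := by
  cases h <;> simp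

lemma admissible_append_singleton {x : ℤ} (hx : 1 ≤ x) :
    ∀ {l : List ℤ}, (∀ y ∈ l, 2 ≤ y) → Admissible (l ++ [x])
  | [], _ => .singleton hx
  | a :: l, h => .cons (h a (by simp)) (admissible_append_singleton hx fun y hy => h y (by simp [hy]))

lemma Admissible.den_pos_le_num {l : List ℤ} (h : Admissible l) : 0 < den l ∧ den l ≤ num l := by
  induction h with
  | singleton ha => simpa using ha
  | cons ha _ ih => simp only [num_cons, den_cons]; constructor <;> nlinarith

lemma ncf_cons_of_ne_nil (a : ℤ) {l : List ℤ} (hl : l ≠ []) : ncf (a :: l) = a - 1 / ncf l := by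
  obtain ⟨b, l, rfl⟩ := List.exists_cons_of_ne_nil hl
  rfl

lemma Admissible.ncf_eq {l : List ℤ} (h : Admissible l) : ncf l = num l / den l := by
  induction h with
  | singleton => simp [ncf]
  | @cons a l _ hl ih =>
    obtain ⟨hden, hle⟩ := hl.den_pos_le_num
    have hnum : (num l : ℚ) ≠ 0 := by norm_cast; omega
    rw [ncf_cons_of_ne_nil a hl.ne_nil, ih, num_cons, den_cons]
    push_cast
    field_simp

end HirzebruchJung

open HirzebruchJung Matrix in
theorem stmt_1 (m : ℕ) (hm : 1 ≤ m) (a : Fin m → ℤ) (n : ℤ)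
    (h2 : ∀ j : Fin m, (j : ℕ) < m - 1 → 2 ≤ a j)
    (h1 : 1 ≤ a ⟨m - 1, by omega⟩)
    (A B : ℤ) (hab : B < A) (hb : 0 ≤ B) (hcop : IsCoprime A B)
    (hfrac : (B : ℚ) / (A : ℚ) = 1 - 1 / ncf (List.ofFn a)) :
    (!![1, 0; -n, 1] *
      (List.ofFn (fun j : Fin m =>
        !![if (j : ℕ) = m - 1 then a j + 1 else a j, 1; -1, 0])).prod).mulVec
      ![-1, 1] = ![-A, n * A + A - B] := by
  obtain ⟨k, rfl⟩ : ∃ k, m = k + 1 := ⟨m - 1, by omega⟩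
  set l := List.ofFn fun j : Fin k => a j.castSucc
  set x := a (Fin.last k)
  have hofn : List.ofFn a = l ++ [x] := by rw [List.ofFn_succ', List.concat_eq_append]
  have hmats : (List.ofFn fun j : Fin (k + 1) =>
      !![if (j : ℕ) = k + 1 - 1 then a j + 1 else a j, 1; -1, 0]).prod =
      (l.map stepMatrix).prod * stepMatrix (x + 1) := by
    rw [List.ofFn_succ', List.concat_eq_append, List.prod_append, List.prod_singleton,
      List.map_ofFn]
    have hne (i : Fin k) : (i : ℕ) ≠ k := i.isLt.ne
    simp [stepMatrix, Function.comp_def, x, hne]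
  have hadm : Admissible (l ++ [x]) := by
    refine admissible_append_singleton h1 fun y hy => ?_
    obtain ⟨j, rfl⟩ := List.mem_ofFn.mp hy
    exact h2 j.castSucc (by simp)
  obtain ⟨hden, hle⟩ := hadm.den_pos_le_num
  obtain ⟨rfl, rfl⟩ : A = num (l ++ [x]) ∧ B = num (l ++ [x]) - den (l ++ [x]) := by
    refine (Rat.div_int_inj (by omega) (by omega) (Int.isCoprime_iff_nat_coprime.mp hcop.symm)
      (Int.isCoprime_iff_nat_coprime.mp ?_) ?_).symm
    · have := (isCoprime_num_den (l ++ [x])).neg_right.add_mul_left_right 1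
      rwa [mul_one, neg_add_eq_sub, isCoprime_comm] at this
    · have hnum : (num (l ++ [x]) : ℚ) ≠ 0 := by norm_cast; omega
      have hden : (den (l ++ [x]) : ℚ) ≠ 0 := by norm_cast; omega
      rw [hfrac, hofn, hadm.ncf_eq]
      field_simp
      push_cast
      ring
  rw [hmats, ← mulVec_mulVec, prod_mul_stepMatrix_add_one_mulVec]
  ext i; fin_cases i
  · simp
  · simp; ring
end

section
/- Let p_1, q_1, p_2, q_2 be positive integers with q_1/p_1 > 1/2 and q_2/p_2 > 1/2, and let r be a rational number with 0 < r < 1. Then there do not exist integers h_1, h_2, h_3 and a positive integer k such that h_1/k < −q_1/p_1, h_2/k < −q_2/p_2, h_3/k < r − 1, and h_1 + h_2 + h_3 = −k − 1. -/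
theorem stmt_5 (p₁ q₁ p₂ q₂ : ℤ) (hp₁ : 0 < p₁) (hq₁ : 0 < q₁)
    (hp₂ : 0 < p₂) (hq₂ : 0 < q₂)
    (h₁ : (1 : ℚ) / 2 < (q₁ : ℚ) / (p₁ : ℚ))
    (h₂ : (1 : ℚ) / 2 < (q₂ : ℚ) / (p₂ : ℚ))
    (r : ℚ) (hr0 : 0 < r) (hr1 : r < 1) :
    ¬ ∃ (h₁' h₂' h₃' k : ℤ), 0 < k ∧
        (h₁' : ℚ) / (k : ℚ) < -((q₁ : ℚ) / (p₁ : ℚ)) ∧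
        (h₂' : ℚ) / (k : ℚ) < -((q₂ : ℚ) / (p₂ : ℚ)) ∧
        (h₃' : ℚ) / (k : ℚ) < r - 1 ∧
        h₁' + h₂' + h₃' = -k - 1 := by
  rintro ⟨a, b, c, k, hk, ha, hb, hc, hsum⟩
  have hkQ : (0 : ℚ) < (k : ℚ) := by exact_mod_cast hk
  have ha' : (a : ℚ) / k < -(1/2) := lt_trans ha (by linarith)
  have hb' : (b : ℚ) / k < -(1/2) := lt_trans hb (by linarith)
  have hc' : (c : ℚ) / k < 0 := lt_trans hc (by linarith)
  rw [div_lt_iff₀ hkQ] at ha' hb' hc'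
  have hA : (2 * a : ℚ) < -k := by linarith
  have hB : (2 * b : ℚ) < -k := by linarith
  have hC : (c : ℚ) < 0 := by linarith
  have hA' : 2 * a < -k := by exact_mod_cast hA
  have hB' : 2 * b < -k := by exact_mod_cast hB
  have hC' : c < 0 := by exact_mod_cast hC
  omega
end
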